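/- Let T be a triangulation of a convex (n+3)-gon with n ≥ 2, and let B_T be the set consisting of the n diagonals of T together with the n diagonals obtainable from T by a single flip. If T₁ and T₂ are triangulations with B_{T₁} = B_{T₂}, then T₁ = T₂. -/

import Mathlib

/-- `x` lies strictly between `a` and `b` in the cyclic order on `ZMod m`. -/
def Pbetween (m : ℕ) (a x b : ZMod m) : Prop :=
  0 < (x - a).val ∧ (x - a).val < (b - a).val

/-- A diagonal of the convex `m`-gon: a pair of distinct non-adjacent vertices. -/
def PIsDiag (m : ℕ) (d : Finset (ZMod m)) : Prop :=
  ∃ a b : ZMod m, d = {a, b} ∧ a ≠ b ∧ a - b ≠ 1 ∧ b - a ≠ 1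

/-- Two diagonals cross iff their endpoint pairs separate each other in cyclic order. -/
def PCross (m : ℕ) (d e : Finset (ZMod m)) : Prop :=
  ∃ a b c d' : ZMod m, d = {a, b} ∧ e = {c, d'} ∧
    a ≠ b ∧ a ≠ c ∧ a ≠ d' ∧ b ≠ c ∧ b ≠ d' ∧ c ≠ d' ∧
    Xor' (Pbetween m a c b) (Pbetween m a d' b)

/-- A triangulation of the convex `m`-gon: a maximal set of pairwise non-crossing diagonals. -/
def PIsTriangulation (m : ℕ) (T : Finset (Finset (ZMod m))) : Prop :=
  (∀ d ∈ T, PIsDiag m d) ∧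
  (∀ d ∈ T, ∀ e ∈ T, ¬ PCross m d e) ∧
  (∀ d, PIsDiag m d → (∀ e ∈ T, ¬ PCross m d e) → d ∈ T)

/-- `B_T`: the diagonals of `T` together with all diagonals obtainable from `T` by one flip. -/
def flipClosure (m : ℕ) (T : Finset (Finset (ZMod m))) : Set (Finset (ZMod m)) :=
  {d | d ∈ T} ∪
  {d' | ∃ d ∈ T, d' ∉ T ∧ PIsDiag m d' ∧ PIsTriangulation m (insert d' (T.erase d))}

/-!
Measure every vertex by `fwdDist o x`, the number of steps from a fixed anchor `o` to `x` around
the polygon. In these coordinates crossing of two diagonals becomes linear arithmetic, so each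
configuration of at most four diagonals is settled by `omega` once the anchor is chosen.

Call `t` a flip of `d ∈ T` when `t` crosses `d` and no other diagonal of `T`. The endpoints of two
crossing diagonals span a quadrilateral, and every diagonal crossing one of its sides crosses one
of its two diagonals. Hence every side of the quadrilateral spanned by `d` and a flip `t` that is
a diagonal lies in `T`. This makes the flip unique, because any other diagonal crossing `d`
crosses one of these sides. A flip exists: among the diagonals crossing `d`, take one that crosses
the fewest diagonals of `T`. If it crossed some `w ≠ d` of `T` as well, one side of the
quadrilateral spanned by it and `w` would cross `d` and fewer diagonals of `T`.

If `T₁ ≠ T₂`, pick `d ∈ T₁ \ T₂`. Then `d` is the flip of some `e ∈ T₂`, and in turn `e` is the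
flip of `d` in `T₁`. So the sides of the quadrilateral spanned by `d` and `e` that are diagonals
lie in `T₁ ∩ T₂`, and since there are at least five vertices, one side `s` is a diagonal. The flip
of `s` in `T₁` crosses `s` and also `d` or `e`, hence `e` (as `d ∈ T₁`). Being in
`B_{T₁} = B_{T₂}`, it must also be a flip in `T₂`, yet it crosses two diagonals `s` and `e` of `T₂`.
-/

variable {m : ℕ}

lemma Finset.pair_eq_pair_iff {α : Type*} [DecidableEq α] {x y z w : α} :
    ({x, y} : Finset α) = {z, w} ↔ x = z ∧ y = w ∨ x = w ∧ y = z := by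
  rw [← Finset.coe_inj]; push_cast; exact Set.pair_eq_pair_iff

def fwdDist (a b : ZMod m) : ℕ := (b - a).val

/-- With positions measured from a common anchor, `Z` lies strictly inside the arc that runs
forward from `X` to `Y`. -/
def InArc (X Y Z : ℕ) : Prop :=
  (X ≤ Y ∧ X < Z ∧ Z < Y) ∨ (Y < X ∧ (X < Z ∨ Z < Y))

@[simp] lemma fwdDist_self (a : ZMod m) : fwdDist a a = 0 := by simp [fwdDist]

lemma ne_of_fwdDist_ne (o : ZMod m) {u v : ZMod m} (h : fwdDist o u ≠ fwdDist o v) : u ≠ v :=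
  fun e => h (e ▸ rfl)

lemma not_pcross_of_mem_of_mem {d e : Finset (ZMod m)} {x : ZMod m} (hd : x ∈ d) (he : x ∈ e) :
    ¬ PCross m d e := by
  rintro ⟨a, b, c, y, rfl, rfl, -, hac, hay, hbc, hby, -⟩
  simp only [Finset.mem_insert, Finset.mem_singleton] at hd he
  rcases hd with rfl | rfl <;> rcases he with rfl | rfl <;> contradiction

lemma pcross_irrefl (d : Finset (ZMod m)) : ¬ PCross m d d := by
  intro h
  obtain ⟨a, b, -, -, rfl, -⟩ := id h
  exact not_pcross_of_mem_of_mem (Finset.mem_insert_self a {b}) (Finset.mem_insert_self a {b}) h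

section

variable [NeZero m]

lemma fwdDist_lt (a b : ZMod m) : fwdDist a b < m := ZMod.val_lt _

lemma fwdDist_inj (o : ZMod m) {u v : ZMod m} : fwdDist o u = fwdDist o v ↔ u = v :=
  (ZMod.val_injective m).eq_iff.trans sub_left_inj

lemma fwdDist_add_fwdDist (o u v : ZMod m) :
    fwdDist o u + fwdDist u v = fwdDist o v ∨ fwdDist o u + fwdDist u v = fwdDist o v + m := by
  have h : fwdDist o v = (fwdDist o u + fwdDist u v) % m := by
    simp only [fwdDist]; rw [← ZMod.val_add]; congr 1; ring
  have := fwdDist_lt o u; have := fwdDist_lt u v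
  rcases lt_or_ge (fwdDist o u + fwdDist u v) m with hlt | hge
  · rw [Nat.mod_eq_of_lt hlt] at h; omega
  · rw [Nat.mod_eq_sub_mod hge, Nat.mod_eq_of_lt (by omega)] at h; omega

lemma pbetween_iff_inArc (o : ZMod m) {u x v : ZMod m} :
    Pbetween m u x v ↔ InArc (fwdDist o u) (fwdDist o v) (fwdDist o x) := by
  have := fwdDist_add_fwdDist o u x; have := fwdDist_add_fwdDist o u v
  have := fwdDist_lt u x; have := fwdDist_lt u v
  have := fwdDist_lt o u; have := fwdDist_lt o v; have := fwdDist_lt o x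
  change 0 < fwdDist u x ∧ fwdDist u x < fwdDist u v ↔ _
  unfold InArc; omega

lemma pcross_pair_iff (o : ZMod m) {x₁ x₂ x₃ x₄ : ZMod m} (h₁₂ : x₁ ≠ x₂) (h₃₄ : x₃ ≠ x₄) :
    PCross m {x₁, x₂} {x₃, x₄} ↔
      fwdDist o x₁ ≠ fwdDist o x₃ ∧ fwdDist o x₁ ≠ fwdDist o x₄ ∧
      fwdDist o x₂ ≠ fwdDist o x₃ ∧ fwdDist o x₂ ≠ fwdDist o x₄ ∧
      Xor (InArc (fwdDist o x₁) (fwdDist o x₂) (fwdDist o x₃))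
        (InArc (fwdDist o x₁) (fwdDist o x₂) (fwdDist o x₄)) := by
  constructor
  · rintro ⟨a, b, c, d, hab, hcd, h₁, h₂, h₃, h₄, h₅, h₆, hx⟩
    change Xor _ _ at hx
    rw [pbetween_iff_inArc o, pbetween_iff_inArc o] at hx
    rw [Finset.pair_eq_pair_iff] at hab hcd
    rw [ne_eq, ← fwdDist_inj o] at h₁ h₂ h₃ h₄ h₅ h₆
    rcases hab with ⟨rfl, rfl⟩ | ⟨rfl, rfl⟩ <;> rcases hcd with ⟨rfl, rfl⟩ | ⟨rfl, rfl⟩ <;>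
      unfold Xor InArc at hx ⊢ <;> omega
  · rintro ⟨h₁₃, h₁₄, h₂₃, h₂₄, hx⟩
    refine ⟨x₁, x₂, x₃, x₄, rfl, rfl, h₁₂, ne_of_fwdDist_ne o h₁₃, ne_of_fwdDist_ne o h₁₄,
      ne_of_fwdDist_ne o h₂₃, ne_of_fwdDist_ne o h₂₄, h₃₄, ?_⟩
    rwa [pbetween_iff_inArc o, pbetween_iff_inArc o]

lemma isDiag_pair_iff {x y : ZMod m} :
    PIsDiag m {x, y} ↔ x ≠ y ∧ fwdDist x y ≠ 1 ∧ fwdDist y x ≠ 1 := by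
  have sub_eq_one {u v : ZMod m} (h : u ≠ v) : u - v = 1 ↔ fwdDist v u = 1 := by
    have h0 : fwdDist v u ≠ 0 := fun h0 => h ((fwdDist_inj v).mp (by simpa using h0))
    have := fwdDist_lt v u
    exact (ZMod.val_eq_one (by omega) _).symm
  constructor
  · rintro ⟨a, b, hab, hne, h₁, h₂⟩
    rw [Finset.pair_eq_pair_iff] at hab
    rcases hab with ⟨rfl, rfl⟩ | ⟨rfl, rfl⟩
    · exact ⟨hne, (sub_eq_one hne.symm).not.mp h₂, (sub_eq_one hne).not.mp h₁⟩
    · exact ⟨hne.symm, (sub_eq_one hne).not.mp h₁, (sub_eq_one hne.symm).not.mp h₂⟩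
  · rintro ⟨hne, h₁, h₂⟩
    exact ⟨x, y, rfl, hne, (sub_eq_one hne).not.mpr h₂, (sub_eq_one hne.symm).not.mpr h₁⟩

lemma PCross.symm {d e : Finset (ZMod m)} (h : PCross m d e) : PCross m e d := by
  obtain ⟨a, b, c, y, rfl, rfl, hab, hac, hay, hbc, hby, hcy, hx⟩ := h
  change Xor _ _ at hx
  rw [pbetween_iff_inArc a, pbetween_iff_inArc a] at hx
  rw [pcross_pair_iff a hcy hab]
  rw [ne_eq, ← fwdDist_inj a] at hab hac hay hbc hby hcy
  have := fwdDist_lt a b; have := fwdDist_lt a c; have := fwdDist_lt a y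
  simp only [fwdDist_self] at *
  unfold Xor InArc at hx ⊢; omega

lemma PCross.isDiag {d e : Finset (ZMod m)} (h : PCross m d e) : PIsDiag m d := by
  obtain ⟨a, b, c, y, rfl, rfl, hab, hac, hay, hbc, hby, hcy, hx⟩ := h
  change Xor _ _ at hx
  rw [pbetween_iff_inArc a, pbetween_iff_inArc a] at hx
  rw [ne_eq, ← fwdDist_inj a] at hab hac hay hbc hby hcy
  have := fwdDist_lt a b; have := fwdDist_lt a c; have := fwdDist_lt a y
  have := fwdDist_add_fwdDist a b a
  simp only [fwdDist_self] at *
  rw [isDiag_pair_iff]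
  unfold Xor InArc at hx
  refine ⟨ne_of_fwdDist_ne a (by simpa using hab), by omega, by omega⟩

lemma PIsDiag.exists_pcross {d : Finset (ZMod m)} (hd : PIsDiag m d) : ∃ t, PCross m t d := by
  obtain ⟨a, b, rfl, -⟩ := id hd
  obtain ⟨hab, hab₁, hba₁⟩ := isDiag_pair_iff.mp hd
  have hab₀ : fwdDist a b ≠ 0 := fun h => hab ((fwdDist_inj a).mp (by rw [h, fwdDist_self]))
  have := fwdDist_lt a b; have := fwdDist_add_fwdDist a b a
  have : Fact (1 < m) := ⟨by omega⟩
  have step (u : ZMod m) : fwdDist u (u + 1) = 1 := by simp [fwdDist, ZMod.val_one]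
  have := step a; have := step b; have := fwdDist_self a
  have := fwdDist_add_fwdDist a b (b + 1); have := fwdDist_lt a (b + 1)
  have hne : a + 1 ≠ b + 1 := fun h => hab (add_right_cancel h)
  refine ⟨{a + 1, b + 1}, (pcross_pair_iff a hne hab).mpr ?_⟩
  unfold Xor InArc; omega

end

def CycOrd (a b c d : ZMod m) : Prop :=
  0 < fwdDist a b ∧ fwdDist a b < fwdDist a c ∧ fwdDist a c < fwdDist a d

def quadSides (a b c d : ZMod m) : Finset (Finset (ZMod m)) :=
  {{a, b}, {b, c}, {c, d}, {d, a}}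

lemma CycOrd.ne {a b c y : ZMod m} (h : CycOrd a b c y) :
    a ≠ b ∧ b ≠ c ∧ c ≠ y ∧ y ≠ a ∧ a ≠ c ∧ b ≠ y := by
  have := fwdDist_self a
  unfold CycOrd at h
  exact ⟨ne_of_fwdDist_ne a (by omega), ne_of_fwdDist_ne a (by omega),
    ne_of_fwdDist_ne a (by omega), ne_of_fwdDist_ne a (by omega),
    ne_of_fwdDist_ne a (by omega), ne_of_fwdDist_ne a (by omega)⟩

lemma not_pcross_of_mem_quadSides {a b c y : ZMod m} {s e : Finset (ZMod m)}
    (hs : s ∈ quadSides a b c y) (he : e = {a, c} ∨ e = {b, y}) : ¬ PCross m s e := by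
  simp only [quadSides, Finset.mem_insert, Finset.mem_singleton] at hs
  rcases hs with rfl | rfl | rfl | rfl <;> rcases he with rfl | rfl
  exacts [not_pcross_of_mem_of_mem (x := a) (by simp) (by simp),
    not_pcross_of_mem_of_mem (x := b) (by simp) (by simp),
    not_pcross_of_mem_of_mem (x := c) (by simp) (by simp),
    not_pcross_of_mem_of_mem (x := b) (by simp) (by simp),
    not_pcross_of_mem_of_mem (x := c) (by simp) (by simp),
    not_pcross_of_mem_of_mem (x := y) (by simp) (by simp),
    not_pcross_of_mem_of_mem (x := a) (by simp) (by simp),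
    not_pcross_of_mem_of_mem (x := y) (by simp) (by simp)]

section

variable [NeZero m] {a b c y : ZMod m}

lemma CycOrd.rotate (h : CycOrd a b c y) : CycOrd b c y a := by
  have := fwdDist_add_fwdDist a b c; have := fwdDist_add_fwdDist a b y
  have := fwdDist_add_fwdDist a b a
  have := fwdDist_lt a y; have := fwdDist_lt b c; have := fwdDist_lt b y
  simp only [CycOrd, fwdDist_self] at *
  omega

lemma PCross.exists_cycOrd {d e : Finset (ZMod m)} (h : PCross m d e) :
    ∃ a b c y, d = {a, c} ∧ e = {b, y} ∧ CycOrd a b c y := by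
  obtain ⟨a, c, p, q, rfl, rfl, -, hap, haq, hcp, hcq, -, hx⟩ := h
  rw [ne_eq, ← fwdDist_inj a] at hap haq hcp hcq
  have := fwdDist_lt a q; have := fwdDist_lt a p
  simp only [fwdDist_self] at hap haq
  change Xor _ _ at hx
  rcases hx with ⟨⟨hp₀, hpc⟩, hq⟩ | ⟨⟨hq₀, hqc⟩, hp⟩
  · change ¬ (0 < fwdDist a q ∧ fwdDist a q < fwdDist a c) at hq
    exact ⟨a, p, c, q, rfl, rfl, hp₀, hpc, by omega⟩
  · change ¬ (0 < fwdDist a p ∧ fwdDist a p < fwdDist a c) at hp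
    exact ⟨a, q, c, p, rfl, Finset.pair_comm p q, hq₀, hqc, by omega⟩

lemma PCross.exists_eq_pair_cycOrd {t : Finset (ZMod m)} (h : PCross m t {a, c}) :
    ∃ b y, t = {b, y} ∧ CycOrd a b c y := by
  obtain ⟨a', b, c', y, hac, rfl, hQ⟩ := h.symm.exists_cycOrd
  rcases Finset.pair_eq_pair_iff.mp hac with ⟨rfl, rfl⟩ | ⟨rfl, rfl⟩
  · exact ⟨b, y, rfl, hQ⟩
  · exact ⟨y, b, Finset.pair_comm b y, hQ.rotate.rotate⟩

lemma CycOrd.pcross_diag_of_pcross_first_side (hQ : CycOrd a b c y) {t : Finset (ZMod m)}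
    (h : PCross m t {a, b}) : PCross m t {a, c} ∨ PCross m t {b, y} := by
  obtain ⟨p, q, rfl, hp⟩ := h.exists_eq_pair_cycOrd
  obtain ⟨-, -, -, -, hac, hby⟩ := hQ.ne
  obtain ⟨hap, hpb, hbq, hqa, -, hpq⟩ := hp.ne
  have := fwdDist_lt a q
  unfold CycOrd at hQ hp
  rcases le_or_gt (fwdDist a q) (fwdDist a c) with hqc | hqc
  · right
    rw [pcross_pair_iff a hpq hby]
    unfold Xor InArc; omega
  · left
    rw [pcross_pair_iff a hpq hac]
    simp only [fwdDist_self]; unfold Xor InArc; omega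

lemma CycOrd.pcross_diag_of_pcross_side (hQ : CycOrd a b c y) {s t : Finset (ZMod m)}
    (hs : s ∈ quadSides a b c y) (h : PCross m t s) :
    PCross m t {a, c} ∨ PCross m t {b, y} := by
  simp only [quadSides, Finset.mem_insert, Finset.mem_singleton] at hs
  rcases hs with rfl | rfl | rfl | rfl
  · exact hQ.pcross_diag_of_pcross_first_side h
  · rw [Finset.pair_comm a c]
    exact (hQ.rotate.pcross_diag_of_pcross_first_side h).symm
  · rw [Finset.pair_comm a c, Finset.pair_comm b y]
    exact hQ.rotate.rotate.pcross_diag_of_pcross_first_side h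
  · rw [Finset.pair_comm b y]
    exact (hQ.rotate.rotate.rotate.pcross_diag_of_pcross_first_side h).symm

lemma CycOrd.exists_side_pcross (hQ : CycOrd a b c y) {t : Finset (ZMod m)}
    (h : PCross m t {a, c}) (hne : t ≠ {b, y}) :
    ∃ s ∈ quadSides a b c y, PCross m t s := by
  obtain ⟨p, q, rfl, hp⟩ := h.exists_eq_pair_cycOrd
  obtain ⟨hab, hbc, hcy, hya, -, -⟩ := hQ.ne
  obtain ⟨-, -, -, -, -, hpq⟩ := hp.ne
  have := fwdDist_lt a q
  rw [ne_eq, Finset.pair_eq_pair_iff, ← fwdDist_inj a, ← fwdDist_inj a, ← fwdDist_inj a,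
    ← fwdDist_inj a] at hne
  unfold CycOrd at hQ hp
  simp only [quadSides, Finset.mem_insert, Finset.mem_singleton, exists_eq_or_imp,
    exists_eq_left]
  rcases lt_trichotomy (fwdDist a p) (fwdDist a b) with hpb | hpb | hpb
  · left
    rw [pcross_pair_iff a hpq hab]
    simp only [fwdDist_self]; unfold Xor InArc; omega
  · rcases lt_or_gt_of_ne (show fwdDist a q ≠ fwdDist a y by omega) with hqy | hqy
    · right; right; left
      rw [pcross_pair_iff a hpq hcy]
      unfold Xor InArc; omega
    · right; right; right
      rw [pcross_pair_iff a hpq hya]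
      simp only [fwdDist_self]; unfold Xor InArc; omega
  · right; left
    rw [pcross_pair_iff a hpq hbc]
    unfold Xor InArc; omega

end

lemma PCross.exists_cycOrd_two_le (hm : 5 ≤ m) {d e : Finset (ZMod m)} (h : PCross m d e) :
    ∃ a b c y, CycOrd a b c y ∧ 2 ≤ fwdDist a b ∧
      (d = {a, c} ∧ e = {b, y} ∨ d = {b, y} ∧ e = {a, c}) := by
  have : NeZero m := ⟨by omega⟩
  obtain ⟨a, b, c, y, rfl, rfl, hQ⟩ := h.exists_cycOrd
  have := fwdDist_add_fwdDist a b c; have := fwdDist_add_fwdDist a c y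
  have := fwdDist_add_fwdDist a y a
  have := fwdDist_lt b c; have := fwdDist_lt c y; have := fwdDist_lt y a
  have hQ' := hQ
  unfold CycOrd at hQ'
  rw [fwdDist_self] at *
  by_cases hab : 2 ≤ fwdDist a b
  · exact ⟨a, b, c, y, hQ, hab, .inl ⟨rfl, rfl⟩⟩
  by_cases hbc : 2 ≤ fwdDist b c
  · exact ⟨b, c, y, a, hQ.rotate, hbc, .inr ⟨Finset.pair_comm a c, rfl⟩⟩
  by_cases hcy : 2 ≤ fwdDist c y
  · exact ⟨c, y, a, b, hQ.rotate.rotate, hcy,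
      .inl ⟨Finset.pair_comm a c, Finset.pair_comm b y⟩⟩
  exact ⟨y, a, b, c, hQ.rotate.rotate.rotate, by omega, .inr ⟨rfl, Finset.pair_comm b y⟩⟩

lemma PIsTriangulation.eq_of_subset {T₁ T₂ : Finset (Finset (ZMod m))}
    (h₁ : PIsTriangulation m T₁) (h₂ : PIsTriangulation m T₂) (h : T₁ ⊆ T₂) : T₁ = T₂ :=
  h.antisymm fun x hx => h₁.2.2 x (h₂.1 x hx) fun e he => h₂.2.1 x hx e (h he)

def CrossesOnly (T : Finset (Finset (ZMod m))) (d t : Finset (ZMod m)) : Prop :=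
  d ∈ T ∧ PCross m t d ∧ ∀ w ∈ T.erase d, ¬ PCross m t w

section

variable {T : Finset (Finset (ZMod m))} {d t : Finset (ZMod m)}

lemma CrossesOnly.eq_of_pcross (h : CrossesOnly T d t) {w : Finset (ZMod m)} (hw : w ∈ T)
    (hc : PCross m t w) : w = d := by
  by_contra hne
  exact h.2.2 w (Finset.mem_erase.mpr ⟨hne, hw⟩) hc

lemma exists_crossesOnly_of_mem_flipClosure (hT : PIsTriangulation m T)
    (ht : t ∈ flipClosure m T) (htT : t ∉ T) : ∃ d, CrossesOnly T d t := by
  obtain ht | ⟨d, hd, -, hdiag, hflip⟩ := ht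
  · exact absurd ht htT
  have hnc : ∀ w ∈ T.erase d, ¬ PCross m t w := fun w hw =>
    hflip.2.1 t (Finset.mem_insert_self _ _) w (Finset.mem_insert_of_mem hw)
  refine ⟨d, hd, ?_, hnc⟩
  by_contra hc
  refine htT (hT.2.2 t hdiag fun e he => ?_)
  rcases eq_or_ne e d with rfl | hne
  · exact hc
  · exact hnc e (Finset.mem_erase.mpr ⟨hne, he⟩)

variable [NeZero m]

lemma CrossesOnly.mem_of_mem_quadSides (hT : PIsTriangulation m T) {a b c y : ZMod m}
    (hQ : CycOrd a b c y) (h : CrossesOnly T {a, c} {b, y}) {s : Finset (ZMod m)}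
    (hs : s ∈ quadSides a b c y) (hsd : PIsDiag m s) : s ∈ T := by
  refine hT.2.2 s hsd fun w hw hsw => ?_
  rcases hQ.pcross_diag_of_pcross_side hs hsw.symm with hac | hby
  · exact hT.2.1 w hw _ h.1 hac
  · obtain rfl := h.eq_of_pcross hw hby.symm
    exact not_pcross_of_mem_quadSides hs (.inl rfl) hsw

lemma CrossesOnly.unique (hT : PIsTriangulation m T) (h : CrossesOnly T d t)
    {t' : Finset (ZMod m)} (h' : CrossesOnly T d t') : t' = t := by
  obtain ⟨a, b, c, y, rfl, rfl, hQ⟩ := h.2.1.symm.exists_cycOrd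
  by_contra hne
  obtain ⟨s, hs, hcs⟩ := hQ.exists_side_pcross h'.2.1 hne
  have hsT := h.mem_of_mem_quadSides hT hQ hs hcs.symm.isDiag
  have hsd : s ≠ {a, c} := by
    rintro rfl
    exact not_pcross_of_mem_quadSides hs (.inr rfl) h.2.1.symm
  exact h'.2.2 s (Finset.mem_erase.mpr ⟨hsd, hsT⟩) hcs

lemma CrossesOnly.isTriangulation (hT : PIsTriangulation m T) (h : CrossesOnly T d t) :
    PIsTriangulation m (insert t (T.erase d)) := by
  refine ⟨?_, ?_, fun x hx hnc => ?_⟩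
  · simp only [Finset.mem_insert, Finset.mem_erase]
    rintro e (rfl | ⟨-, he⟩)
    exacts [h.2.1.isDiag, hT.1 e he]
  · simp only [Finset.mem_insert]
    rintro e (rfl | he) f (rfl | hf)
    · exact pcross_irrefl _
    · exact h.2.2 f hf
    · exact fun hc => h.2.2 e he hc.symm
    · exact hT.2.1 e (Finset.mem_of_mem_erase he) f (Finset.mem_of_mem_erase hf)
  have hncT : ∀ w ∈ T.erase d, ¬ PCross m x w := fun w hw =>
    hnc w (Finset.mem_insert_of_mem hw)
  by_cases hxd : PCross m x d
  · rw [h.unique hT ⟨h.1, hxd, hncT⟩]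
    exact Finset.mem_insert_self _ _
  · refine Finset.mem_insert_of_mem (Finset.mem_erase.mpr ⟨?_, hT.2.2 x hx fun w hw => ?_⟩)
    · rintro rfl
      exact hnc t (Finset.mem_insert_self _ _) h.2.1.symm
    · rcases eq_or_ne w d with rfl | hwd
      · exact hxd
      · exact hncT w (Finset.mem_erase.mpr ⟨hwd, hw⟩)

lemma CrossesOnly.mem_flipClosure (hT : PIsTriangulation m T) (h : CrossesOnly T d t) :
    t ∈ flipClosure m T :=
  .inr ⟨d, h.1, fun ht => hT.2.1 t ht d h.1 h.2.1, h.2.1.isDiag, h.isTriangulation hT⟩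

open scoped Classical in
lemma exists_card_filter_pcross_lt (hT : PIsTriangulation m T)
    (ht : PCross m t d) {w : Finset (ZMod m)} (hw : w ∈ T.erase d) (hcw : PCross m t w) :
    ∃ s, PCross m s d ∧ (T.filter (PCross m s)).card < (T.filter (PCross m t)).card := by
  obtain ⟨hwd, hwT⟩ := Finset.mem_erase.mp hw
  obtain ⟨u, p, v, q, rfl, rfl, hQ⟩ := hcw.exists_cycOrd
  obtain ⟨s, hs, hds⟩ := hQ.exists_side_pcross ht.symm hwd.symm
  refine ⟨s, hds.symm, Finset.card_lt_card ?_⟩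
  refine (Finset.ssubset_iff_of_subset fun x hx => ?_).mpr
    ⟨{p, q}, Finset.mem_filter.mpr ⟨hwT, hcw⟩, fun hx => ?_⟩
  · obtain ⟨hxT, hxs⟩ := Finset.mem_filter.mp hx
    refine Finset.mem_filter.mpr ⟨hxT, ?_⟩
    rcases hQ.pcross_diag_of_pcross_side hs hxs.symm with h | h
    · exact h.symm
    · exact absurd h (hT.2.1 x hxT _ hwT)
  · exact not_pcross_of_mem_quadSides hs (.inr rfl) (Finset.mem_filter.mp hx).2

lemma exists_crossesOnly (hT : PIsTriangulation m T) (hd : d ∈ T) : ∃ t, CrossesOnly T d t := by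
  classical
  obtain ⟨t₀, ht₀⟩ := (hT.1 d hd).exists_pcross
  obtain ⟨t, ht, hmin⟩ := Finset.exists_min_image (Finset.univ.filter (PCross m · d))
    (fun t => (T.filter (PCross m t)).card) ⟨t₀, by simpa using ht₀⟩
  simp only [Finset.mem_filter, Finset.mem_univ, true_and] at ht hmin
  refine ⟨t, hd, ht, fun w hw hcw => ?_⟩
  obtain ⟨s, hs, hlt⟩ := exists_card_filter_pcross_lt hT ht hw hcw
  exact (hmin s hs).not_gt (by convert hlt)

end

lemma flipClosure_ne_of_crossesOnly [NeZero m] {T₁ T₂ : Finset (Finset (ZMod m))}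
    (h₁ : PIsTriangulation m T₁) (h₂ : PIsTriangulation m T₂) {a b c y : ZMod m}
    (hQ : CycOrd a b c y) (hab : 2 ≤ fwdDist a b)
    (hd : CrossesOnly T₁ {a, c} {b, y}) (he : CrossesOnly T₂ {b, y} {a, c}) :
    flipClosure m T₁ ≠ flipClosure m T₂ := by
  intro hB
  obtain ⟨hab', hbc, -, hya, -, -⟩ := hQ.ne
  have hs : PIsDiag m {a, b} := by
    have := fwdDist_add_fwdDist a b a; have := fwdDist_lt a y
    unfold CycOrd at hQ
    rw [fwdDist_self] at *
    exact isDiag_pair_iff.mpr ⟨hab', by omega, by omega⟩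
  have hs₁ : {a, b} ∈ T₁ := hd.mem_of_mem_quadSides h₁ hQ (by simp [quadSides]) hs
  have hs₂ : {a, b} ∈ T₂ := by
    rw [Finset.pair_comm a c] at he
    exact he.mem_of_mem_quadSides h₂ hQ.rotate (by simp [quadSides]) hs
  obtain ⟨t, ht⟩ := exists_crossesOnly h₁ hs₁
  obtain ⟨r, hr⟩ := exists_crossesOnly_of_mem_flipClosure h₂ (hB ▸ ht.mem_flipClosure h₁)
    fun htT => h₂.2.1 t htT _ hs₂ ht.2.1
  have htby : PCross m t {b, y} := by
    refine (hQ.pcross_diag_of_pcross_first_side ht.2.1).resolve_left fun htac => ?_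
    rcases Finset.pair_eq_pair_iff.mp (ht.eq_of_pcross hd.1 htac) with ⟨-, h⟩ | ⟨h, -⟩
    exacts [hbc h.symm, hab' h]
  rcases Finset.pair_eq_pair_iff.mp
    ((hr.eq_of_pcross hs₂ ht.2.1).trans (hr.eq_of_pcross he.1 htby).symm) with ⟨h, -⟩ | ⟨h, -⟩
  exacts [hab' h, hya h.symm]

/-- If two triangulations `T₁`, `T₂` of a convex `(n+3)`-gon (`n ≥ 2`) satisfy
`B_{T₁} = B_{T₂}`, then `T₁ = T₂`. -/
theorem stmt_14 (n : ℕ) (hn : 2 ≤ n) (T₁ T₂ : Finset (Finset (ZMod (n + 3))))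
    (h1 : PIsTriangulation (n + 3) T₁) (h2 : PIsTriangulation (n + 3) T₂)
    (hB : flipClosure (n + 3) T₁ = flipClosure (n + 3) T₂) :
    T₁ = T₂ := by
  by_contra hne
  obtain ⟨d, hd₁, hd₂⟩ : ∃ d ∈ T₁, d ∉ T₂ := by
    by_contra! h
    exact hne (h1.eq_of_subset h2 h)
  obtain ⟨e, he⟩ := exists_crossesOnly_of_mem_flipClosure h2 (hB ▸ .inl hd₁) hd₂
  have heT₁ : e ∉ T₁ := fun h => h1.2.1 d hd₁ e h he.2.1
  obtain ⟨d', hd⟩ := exists_crossesOnly_of_mem_flipClosure h1 (hB ▸ .inl he.1) heT₁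
  obtain rfl := hd.eq_of_pcross hd₁ he.2.1.symm
  obtain ⟨a, b, c, y, hQ, hab, ⟨rfl, rfl⟩ | ⟨rfl, rfl⟩⟩ :=
    he.2.1.exists_cycOrd_two_le (by omega)
  · exact flipClosure_ne_of_crossesOnly h1 h2 hQ hab hd he hB
  · exact flipClosure_ne_of_crossesOnly h2 h1 hQ hab he hd hB.symm
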